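/- arXiv:math/0502341 — 2 statements merged into one kernel-verified Lean document; each statement's English description precedes it below -/
import Mathlib

section
/- Let L be the Laplacian of a nonnegative weight matrix W with zero diagonal satisfying the weight balance condition. If the directed graph associated with W (arc i→j when w_{ij}>0) is weakly connected, then the kernel of L + L^T is exactly the one-dimensional subspace spanned by the all-ones vector. -/
open Matrix BigOperators

/-- For a weight-balanced, weakly connected nonnegative weight
matrix, the kernel of `L + Lᵀ` is exactly the span of the all-ones vector. -/
theorem stmt_5 (N : ℕ) (w : Fin N → Fin N → ℝ)
    (hw : ∀ i j, 0 ≤ w i j) (hwd : ∀ i, w i i = 0)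
    (hbal : ∀ i, ∑ j, w i j = ∑ j, w j i)
    (hweak : ∀ i j : Fin N, Relation.ReflTransGen (fun a b => 0 < w a b ∨ 0 < w b a) i j)
    (L : Matrix (Fin N) (Fin N) ℝ)
    (hL : ∀ i j, L i j = if i = j then ∑ k, w i k else -(w i j)) :
    ∀ v : Fin N → ℝ, (L + Lᵀ) *ᵥ v = 0 ↔ ∃ c : ℝ, v = fun _ => c := by
  intro v
  set S : Fin N → Fin N → ℝ := fun i j => w i j + w j i with hS
  have hSsymm : ∀ i j, S i j = S j i := fun i j => by simp [hS, add_comm]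
  have hSnn : ∀ i j, 0 ≤ S i j := fun i j => add_nonneg (hw i j) (hw j i)
  have hSdiag : ∀ i, S i i = 0 := fun i => by simp [hS, hwd i]
  have hM : ∀ i, ((L + Lᵀ) *ᵥ v) i = ∑ j, S i j * (v i - v j) := by
    intro i
    have hentry : ∀ j, (L + Lᵀ) i j =
        (if i = j then 2 * ∑ k, w i k else 0) - S i j := by
      intro j
      by_cases h : i = j
      · subst h; simp [Matrix.add_apply, hL, hSdiag i]; ring
      · simp [Matrix.add_apply, hL, h, Ne.symm h, hS]; ring
    have hsum : (∑ j, S i j) = 2 * ∑ k, w i k := by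
      simp only [hS, Finset.sum_add_distrib]
      rw [← hbal i]; ring
    calc ((L + Lᵀ) *ᵥ v) i = ∑ j, ((if i = j then 2 * ∑ k, w i k else 0) - S i j) * v j := by
          simp only [Matrix.mulVec, dotProduct]
          exact Finset.sum_congr rfl fun j _ => by rw [hentry j]
      _ = (∑ j, (if i = j then (2 * ∑ k, w i k) * v j else 0)) - ∑ j, S i j * v j := by
          rw [← Finset.sum_sub_distrib]
          refine Finset.sum_congr rfl fun j _ => by by_cases h : i = j <;> simp [h] <;> ring
      _ = (2 * ∑ k, w i k) * v i - ∑ j, S i j * v j := by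
          rw [Finset.sum_ite_eq]; simp
      _ = (∑ j, S i j) * v i - ∑ j, S i j * v j := by rw [hsum]
      _ = ∑ j, S i j * (v i - v j) := by
          rw [Finset.sum_mul, ← Finset.sum_sub_distrib]
          exact Finset.sum_congr rfl fun j _ => by ring
  constructor
  · intro h
    have hA : ∑ i, ∑ j, S i j * (v i * (v i - v j)) = 0 := by
      have : ∀ i, ∑ j, S i j * (v i * (v i - v j)) = v i * ((L + Lᵀ) *ᵥ v) i := by
        intro i; rw [hM i, Finset.mul_sum]
        exact Finset.sum_congr rfl fun j _ => by ring
      simp [this, h]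
    have hB : ∑ i, ∑ j, S i j * (v j * (v j - v i)) = 0 := by
      rw [Finset.sum_comm]
      calc ∑ j, ∑ i, S i j * (v j * (v j - v i))
          = ∑ j, ∑ i, S j i * (v j * (v j - v i)) :=
            Finset.sum_congr rfl fun j _ => Finset.sum_congr rfl fun i _ => by
              rw [hSsymm i j]
        _ = 0 := hA
    have hQ : ∑ i, ∑ j, S i j * (v i - v j) ^ 2 = 0 := by
      have : ∑ i, ∑ j, S i j * (v i - v j) ^ 2 =
          (∑ i, ∑ j, S i j * (v i * (v i - v j))) +
          (∑ i, ∑ j, S i j * (v j * (v j - v i))) := by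
        rw [← Finset.sum_add_distrib]
        refine Finset.sum_congr rfl fun i _ => ?_
        rw [← Finset.sum_add_distrib]
        exact Finset.sum_congr rfl fun j _ => by ring
      rw [this, hA, hB, add_zero]
    have hterm : ∀ i j, S i j * (v i - v j) ^ 2 = 0 := by
      intro i j
      have h1 : ∀ i ∈ Finset.univ (α := Fin N),
          0 ≤ ∑ j, S i j * (v i - v j) ^ 2 := fun i _ =>
        Finset.sum_nonneg fun j _ => mul_nonneg (hSnn i j) (sq_nonneg _)
      have h2 := (Finset.sum_eq_zero_iff_of_nonneg h1).mp hQ i (Finset.mem_univ i)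
      have h3 : ∀ j ∈ Finset.univ (α := Fin N),
          0 ≤ S i j * (v i - v j) ^ 2 := fun j _ =>
        mul_nonneg (hSnn i j) (sq_nonneg _)
      exact (Finset.sum_eq_zero_iff_of_nonneg h3).mp h2 j (Finset.mem_univ j)
    have hstep : ∀ a b, (0 < w a b ∨ 0 < w b a) → v a = v b := by
      intro a b hab
      have hpos : 0 < S a b := by
        rcases hab with h' | h'
        · exact lt_of_lt_of_le h' (le_add_of_nonneg_right (hw b a))
        · exact lt_of_lt_of_le h' (le_add_of_nonneg_left (hw a b))
      have := hterm a b
      have hsq : (v a - v b) ^ 2 = 0 := by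
        rcases mul_eq_zero.mp this with h' | h'
        · exact absurd h' (ne_of_gt hpos)
        · exact h'
      have := pow_eq_zero_iff (n := 2) (by norm_num) |>.mp hsq
      linarith [sub_eq_zero.mp this]
    have hchain : ∀ a b : Fin N, v a = v b := by
      intro a b
      induction hweak a b with
      | refl => rfl
      | tail _ hbc ih => exact ih.trans (hstep _ _ hbc)
    rcases Nat.eq_zero_or_pos N with hN | hN
    · subst hN; exact ⟨0, funext fun i => i.elim0⟩
    · exact ⟨v ⟨0, hN⟩, funext fun i => hchain i ⟨0, hN⟩⟩
  · rintro ⟨c, rfl⟩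
    funext i
    rw [Pi.zero_apply, hM i]
    simp
end

section
/- Let J = (1/2) ∑_i (V^i + m_i v^{iT} v^i) be the total energy, where V^i = ∑_{j≠i} V^{ij}(‖x^i - x^j‖) with symmetric potentials V^{ij} = V^{ji}. Along solutions of ẋ^i = v^i, m_i v̇^i = -∑_{j∈N_i} w_{ij}(v^i - v^j) - ∑_{j≠i} ∇_{x^i} V^{ij}, the time derivative satisfies dJ/dt = -(1/2) v^T ((L + L^T) ⊗ I_n) v ≤ 0, where L is the Laplacian of the weight matrix W. -/
/-!
Differentiating `J`, the kinetic part contributes `2 vⁱ · v̇ⁱ`. Since `∇_{xⁱ}Vⁱʲ = -∇_{xʲ}Vⁱʲ`,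
the derivative of the potential part is `2 ∑ᵢⱼ fⁱʲ · vⁱ`, which cancels the forces in the
dynamics, leaving `J̇ = -∑ᵢ vⁱ · ∑ⱼ wᵢⱼ (vⁱ - vʲ) = -vᵀ (L ⊗ Iₙ) v`, and symmetrising the
quadratic form gives the factor `(L + Lᵀ) / 2`. Under weight balance `∑ⱼ wᵢⱼ aⱼ²` summed over `i`
equals `∑ᵢⱼ wᵢⱼ aᵢ²`, so `2 aᵀ L a = ∑ᵢⱼ wᵢⱼ (aᵢ - aⱼ)² ≥ 0` in every coordinate.
-/

open Matrix BigOperators Kronecker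

namespace Matrix

variable {ι κ R : Type*} [Fintype ι] [Fintype κ]

theorem kronecker_one_mulVec [DecidableEq κ] [NonAssocSemiring R] (A : Matrix ι ι R)
    (x : ι × κ → R) :
    (A ⊗ₖ (1 : Matrix κ κ R)) *ᵥ x = fun p => (A *ᵥ fun i => x (i, p.2)) p.1 := by
  ext ⟨i, k⟩
  simp [mulVec, dotProduct, kroneckerMap_apply, one_apply, Fintype.sum_prod_type]

theorem dotProduct_kronecker_one_mulVec [DecidableEq κ] [NonAssocSemiring R] (A : Matrix ι ι R)
    (x : ι × κ → R) :
    x ⬝ᵥ ((A ⊗ₖ (1 : Matrix κ κ R)) *ᵥ x) =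
      ∑ k, (fun i => x (i, k)) ⬝ᵥ (A *ᵥ fun i => x (i, k)) := by
  rw [kronecker_one_mulVec, dotProduct, Fintype.sum_prod_type, Finset.sum_comm]
  rfl

theorem dotProduct_add_transpose_mulVec [CommSemiring R] (A : Matrix ι ι R) (a : ι → R) :
    a ⬝ᵥ ((A + Aᵀ) *ᵥ a) = 2 * (a ⬝ᵥ (A *ᵥ a)) := by
  rw [add_mulVec, dotProduct_add, mulVec_transpose, dotProduct_comm a (a ᵥ* A),
    ← dotProduct_mulVec, two_mul]

end Matrix

section Laplacian

variable {ι R : Type*} [Fintype ι]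

theorem mulVec_laplacian [DecidableEq ι] [CommRing R] {w : ι → ι → R} (hwd : ∀ i, w i i = 0)
    {L : Matrix ι ι R} (hL : ∀ i j, L i j = if i = j then ∑ k, w i k else -(w i j)) (a : ι → R) :
    L *ᵥ a = fun i => ∑ j, w i j * (a i - a j) := by
  ext i
  have hdiag : ∀ j, L i j = (if i = j then ∑ k, w i k else 0) - w i j := by
    intro j
    rw [hL]
    split_ifs with h
    · simp [h, hwd]
    · simp
  simp [mulVec, dotProduct, hdiag, sub_mul, mul_sub, Finset.sum_mul, ite_mul]

theorem sum_mul_sum_mul_sub_nonneg [CommRing R] [LinearOrder R] [IsStrictOrderedRing R]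
    {w : ι → ι → R} (hw : ∀ i j, 0 ≤ w i j) (hbal : ∀ i, ∑ j, w i j = ∑ j, w j i) (a : ι → R) :
    0 ≤ ∑ i, a i * ∑ j, w i j * (a i - a j) := by
  have hsq : ∑ i, ∑ j, w i j * a j ^ 2 = ∑ i, ∑ j, w i j * a i ^ 2 := by
    rw [Finset.sum_comm]
    simp_rw [← Finset.sum_mul, ← hbal]
  have hsos : ∑ i, ∑ j, w i j * (a i - a j) ^ 2 = 2 * ∑ i, a i * ∑ j, w i j * (a i - a j) := by
    have hterm : ∀ i j, w i j * (a i - a j) ^ 2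
        = 2 * (a i * (w i j * (a i - a j))) + (w i j * a j ^ 2 - w i j * a i ^ 2) := by
      intros; ring
    simp_rw [hterm, Finset.sum_add_distrib, Finset.sum_sub_distrib, hsq, sub_self, add_zero,
      ← Finset.mul_sum]
  have hsos_nonneg : 0 ≤ ∑ i, ∑ j, w i j * (a i - a j) ^ 2 :=
    Finset.sum_nonneg fun i _ => Finset.sum_nonneg fun j _ => mul_nonneg (hw i j) (sq_nonneg _)
  linarith

end Laplacian

theorem sum_sum_dotProduct_sub_of_antisymm {ι κ R : Type*} [Fintype ι] [Fintype κ] [CommRing R]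
    {f : ι → ι → κ → R} (hf : ∀ i j, f i j = -f j i) (x : ι → κ → R) :
    ∑ i, ∑ j, f i j ⬝ᵥ (x i - x j) = 2 * ∑ i, ∑ j, f i j ⬝ᵥ x i := by
  have hswap : ∑ i, ∑ j, f i j ⬝ᵥ x j = -∑ i, ∑ j, f i j ⬝ᵥ x i := by
    rw [Finset.sum_comm, ← Finset.sum_neg_distrib]
    refine Finset.sum_congr rfl fun j _ => ?_
    rw [← Finset.sum_neg_distrib]
    refine Finset.sum_congr rfl fun i _ => ?_
    rw [hf i j, neg_dotProduct]
  simp_rw [dotProduct_sub, Finset.sum_sub_distrib, hswap]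
  ring

theorem hasDerivAt_energy {ι κ : Type*} [Fintype ι] [DecidableEq ι] [Fintype κ] {m : ι → ℝ}
    (hm : ∀ i, m i ≠ 0) {w : ι → ι → ℝ} {v : ι → ℝ → κ → ℝ} {Vp : ι → ι → ℝ → ℝ}
    {f : ι → ι → κ → ℝ} {t : ℝ} (hf : ∀ i j, f i j = -f j i)
    (hV : ∀ i j, i ≠ j → HasDerivAt (Vp i j) (∑ k, f i j k * (v i t k - v j t k)) t)
    (hv : ∀ i k, HasDerivAt (fun s => v i s k)
      ((1 / m i) * (-(∑ j, w i j * (v i t k - v j t k)) - ∑ j, f i j k)) t) :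
    HasDerivAt
      (fun s => (1 / 2) * ∑ i, ((∑ j ∈ Finset.univ.erase i, Vp i j s) + m i * ∑ k, (v i s k) ^ 2))
      (-∑ i, ∑ k, v i t k * ∑ j, w i j * (v i t k - v j t k)) t := by
  have hpot : ∀ i, HasDerivAt (fun s => ∑ j ∈ Finset.univ.erase i, Vp i j s)
      (∑ j, f i j ⬝ᵥ (v i t - v j t)) t := by
    intro i
    rw [← Finset.sum_erase _ (f := fun j => f i j ⬝ᵥ (v i t - v j t)) (a := i) (by simp)]
    exact HasDerivAt.fun_sum fun j hj => hV i j (Finset.ne_of_mem_erase hj).symm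
  have hkin : ∀ i, HasDerivAt (fun s => m i * ∑ k, v i s k ^ 2)
      (∑ k, 2 * v i t k * (-(∑ j, w i j * (v i t k - v j t k)) - ∑ j, f i j k)) t := by
    intro i
    refine ((HasDerivAt.fun_sum fun k _ => (hv i k).pow 2).const_mul (m i)).congr_deriv ?_
    rw [Finset.mul_sum]
    refine Finset.sum_congr rfl fun k _ => ?_
    field_simp [hm i]
    ring
  have hforce : ∑ i, ∑ k, v i t k * ∑ j, f i j k = ∑ i, ∑ j, f i j ⬝ᵥ v i t := by
    refine Finset.sum_congr rfl fun i _ => ?_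
    simp_rw [dotProduct, Finset.mul_sum, mul_comm (v i t _)]
    exact Finset.sum_comm
  refine ((HasDerivAt.fun_sum fun i _ => (hpot i).add (hkin i)).const_mul (1 / 2)).congr_deriv ?_
  have hsplit : ∀ i k, 2 * v i t k * (-(∑ j, w i j * (v i t k - v j t k)) - ∑ j, f i j k)
      = -(2 * (v i t k * ∑ j, w i j * (v i t k - v j t k))) - 2 * (v i t k * ∑ j, f i j k) := by
    intros; ring
  simp_rw [Finset.sum_add_distrib, sum_sum_dotProduct_sub_of_antisymm hf, hsplit,
    Finset.sum_sub_distrib, Finset.sum_neg_distrib, ← Finset.mul_sum, hforce]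
  ring

theorem stmt_12_general (N n : ℕ) (m : Fin N → ℝ) (hm : ∀ i, 0 < m i)
    (w : Fin N → Fin N → ℝ) (hw : ∀ i j, 0 ≤ w i j) (hwd : ∀ i, w i i = 0)
    (hbal : ∀ i, ∑ j, w i j = ∑ j, w j i)
    (L : Matrix (Fin N) (Fin N) ℝ)
    (hL : ∀ i j, L i j = if i = j then ∑ k, w i k else -(w i j))
    (v : Fin N → ℝ → Fin n → ℝ)
    (Vp : Fin N → Fin N → ℝ → ℝ)
    (f : Fin N → Fin N → ℝ → Fin n → ℝ)
    (hfa : ∀ i j t k, f i j t k = -(f j i t k))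
    (hVdyn : ∀ i j t, i ≠ j →
      HasDerivAt (Vp i j) (∑ k, f i j t k * (v i t k - v j t k)) t)
    (hdyn : ∀ i t k, HasDerivAt (fun s => v i s k)
      ((1 / m i) * (-(∑ j, w i j * (v i t k - v j t k)) - ∑ j, f i j t k)) t)
    (t : ℝ) :
    HasDerivAt
      (fun s => (1 / 2) * ∑ i, ((∑ j ∈ Finset.univ.erase i, Vp i j s)
        + m i * ∑ k, (v i s k) ^ 2))
      (-(1 / 2) * ((fun p : Fin N × Fin n => v p.1 t p.2) ⬝ᵥ
        (((L + Lᵀ) ⊗ₖ (1 : Matrix (Fin n) (Fin n) ℝ)) *ᵥ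
          (fun p : Fin N × Fin n => v p.1 t p.2)))) t ∧
    -(1 / 2) * ((fun p : Fin N × Fin n => v p.1 t p.2) ⬝ᵥ
        (((L + Lᵀ) ⊗ₖ (1 : Matrix (Fin n) (Fin n) ℝ)) *ᵥ
          (fun p : Fin N × Fin n => v p.1 t p.2))) ≤ 0 := by
  have hquad : (fun p : Fin N × Fin n => v p.1 t p.2) ⬝ᵥ
      (((L + Lᵀ) ⊗ₖ (1 : Matrix (Fin n) (Fin n) ℝ)) *ᵥ (fun p : Fin N × Fin n => v p.1 t p.2))
      = 2 * ∑ i, ∑ k, v i t k * ∑ j, w i j * (v i t k - v j t k) := by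
    simp_rw [dotProduct_kronecker_one_mulVec, dotProduct_add_transpose_mulVec,
      mulVec_laplacian hwd hL, dotProduct, ← Finset.mul_sum]
    rw [Finset.sum_comm]
  have hdiss : 0 ≤ ∑ i, ∑ k, v i t k * ∑ j, w i j * (v i t k - v j t k) := by
    rw [Finset.sum_comm]
    exact Finset.sum_nonneg fun k _ => sum_mul_sum_mul_sub_nonneg hw hbal (fun i => v i t k)
  rw [hquad]
  refine ⟨?_, by linarith⟩
  refine (hasDerivAt_energy (fun i => (hm i).ne') (fun i j => funext (hfa i j t))
    (fun i j hij => hVdyn i j t hij) (fun i k => hdyn i t k)).congr_deriv ?_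
  ring

/-- Along solutions, the total energy
`J = (1/2) ∑ᵢ (Vⁱ + mᵢ ‖vⁱ‖²)` satisfies
`dJ/dt = -(1/2) vᵀ ((L + Lᵀ) ⊗ Iₙ) v ≤ 0`.  Here `Vp i j t` is the value of the
pairwise potential `Vⁱʲ` along the solution and `f i j t = ∇_{xⁱ}Vⁱʲ`. -/
theorem stmt_12 (N n : ℕ) (m : Fin N → ℝ) (hm : ∀ i, 0 < m i)
    (w : Fin N → Fin N → ℝ) (hw : ∀ i j, 0 ≤ w i j) (hwd : ∀ i, w i i = 0)
    (hbal : ∀ i, ∑ j, w i j = ∑ j, w j i)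
    (L : Matrix (Fin N) (Fin N) ℝ)
    (hL : ∀ i j, L i j = if i = j then ∑ k, w i k else -(w i j))
    (v : Fin N → ℝ → Fin n → ℝ)
    (Vp : Fin N → Fin N → ℝ → ℝ)
    (f : Fin N → Fin N → ℝ → Fin n → ℝ)
    (hVsym : ∀ i j t, Vp i j t = Vp j i t)
    (hfa : ∀ i j t k, f i j t k = -(f j i t k))
    (hfd : ∀ i t, f i i t = 0)
    (hVdyn : ∀ i j t, i ≠ j →
      HasDerivAt (Vp i j) (∑ k, f i j t k * (v i t k - v j t k)) t)
    (hdyn : ∀ i t k, HasDerivAt (fun s => v i s k)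
      ((1 / m i) * (-(∑ j, w i j * (v i t k - v j t k)) - ∑ j, f i j t k)) t)
    (t : ℝ) :
    HasDerivAt
      (fun s => (1 / 2) * ∑ i, ((∑ j ∈ Finset.univ.erase i, Vp i j s)
        + m i * ∑ k, (v i s k) ^ 2))
      (-(1 / 2) * ((fun p : Fin N × Fin n => v p.1 t p.2) ⬝ᵥ
        (((L + Lᵀ) ⊗ₖ (1 : Matrix (Fin n) (Fin n) ℝ)) *ᵥ
          (fun p : Fin N × Fin n => v p.1 t p.2)))) t ∧
    -(1 / 2) * ((fun p : Fin N × Fin n => v p.1 t p.2) ⬝ᵥ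
        (((L + Lᵀ) ⊗ₖ (1 : Matrix (Fin n) (Fin n) ℝ)) *ᵥ
          (fun p : Fin N × Fin n => v p.1 t p.2))) ≤ 0 :=
  stmt_12_general N n m hm w hw hwd hbal L hL v Vp f hfa hVdyn hdyn t
end
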